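/- arXiv:math/0612075 — 5 statements merged into one kernel-verified Lean document; each statement's English description precedes it below -/
import Mathlib

section
/- Let g : [0,∞) → [0,∞) be a function such that (a) g is nonincreasing, (b) g is convex, (c) g(x) → 0 as x → ∞, and (d) g(x) ≥ g(0) - x for all x ≥ 0. Then there exists a probability measure Π on [0,∞) with finite expectation such that g(t) = E_Π[(X-t)^+] for all t ≥ 0. -/
/-!
The right derivative `φ x = g'(x+)` of the convex function `g` is nondecreasing and
right-continuous on `[0, ∞)`; condition (d) gives `φ ≥ -1` and condition (c) gives `φ → 0` at
infinity. Hence `F = 1 + φ` on `[0, ∞)`, `F = 0` on `(-∞, 0)`, is the distribution function of a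
probability measure `Π` on `[0, ∞)` with `Π (t, ∞) = -φ t`. By the layer-cake formula and the
fundamental theorem of calculus for right derivatives,
`E_Π[(X - t)⁺] = ∫_t^∞ Π (u, ∞) du = -∫_t^∞ φ = g t - lim g = g t`.
-/

open MeasureTheory Filter Set Topology

lemma tendsto_slope_atTop_of_tendsto {g : ℝ → ℝ} {l : ℝ} (hg : Tendsto g atTop (𝓝 l)) (x : ℝ) :
    Tendsto (slope g x) atTop (𝓝 0) := by
  rw [show slope g x = fun y => (g y - g x) / (y - x) from funext (slope_def_field g x)]
  exact (hg.sub_const (g x)).div_atTop (tendsto_atTop_add_const_right _ (-x) tendsto_id)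

lemma integrableOn_Ioi_and_integral_eq_of_hasDeriv_right_of_nonneg {f f' : ℝ → ℝ} {a l : ℝ}
    (hcont : ContinuousOn f (Ici a)) (hderiv : ∀ x ∈ Ioi a, HasDerivWithinAt f (f' x) (Ioi x) x)
    (hpos : ∀ x ∈ Ioi a, 0 ≤ f' x) (hf : Tendsto f atTop (𝓝 l)) :
    IntegrableOn f' (Ioi a) ∧ ∫ x in Ioi a, f' x = l - f a := by
  have hIoc : ∀ b, IntegrableOn f' (Ioc a b) := fun b =>
    intervalIntegral.integrableOn_deriv_right_of_nonneg (hcont.mono Icc_subset_Ici_self)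
      (fun x hx => hderiv x hx.1) fun x hx => hpos x hx.1
  have hftc : ∀ b ≥ a, ∫ x in a..b, f' x = f b - f a := fun b hab =>
    intervalIntegral.integral_eq_sub_of_hasDeriv_right_of_le hab
      (hcont.mono Icc_subset_Ici_self) (fun x hx => hderiv x hx.1)
      ((intervalIntegrable_iff_integrableOn_Ioc_of_le hab).2 (hIoc b))
  have hlim : Tendsto (fun b => ∫ x in a..b, f' x) atTop (𝓝 (l - f a)) := by
    refine (hf.sub_const (f a)).congr' ?_
    filter_upwards [eventually_ge_atTop a] with b hb using (hftc b hb).symm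
  have hint : IntegrableOn f' (Ioi a) := by
    refine integrableOn_Ioi_of_intervalIntegral_norm_tendsto _ a hIoc tendsto_id (hlim.congr' ?_)
    filter_upwards [eventually_ge_atTop a] with b hb
    simp only [intervalIntegral.integral_of_le hb]
    exact (setIntegral_congr_fun measurableSet_Ioc fun x hx =>
      Real.norm_of_nonneg (hpos x hx.1)).symm
  exact ⟨hint, tendsto_nhds_unique (intervalIntegral_tendsto_integral_Ioi a hint tendsto_id) hlim⟩

lemma lintegral_ofReal_max_sub_eq_lintegral_measure_Ioi (μ : Measure ℝ) (t : ℝ) :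
    ∫⁻ x, ENNReal.ofReal (max (x - t) 0) ∂μ = ∫⁻ u in Ioi t, μ (Ioi u) := by
  have hlevel : ∀ s > 0, {x | s < max (x - t) 0} = Ioi (s + t) := fun s hs => by
    ext x
    simp [hs.not_gt, lt_sub_iff_add_lt]
  have hmeas : Measurable fun u => μ (Ioi u) :=
    Antitone.measurable fun u v huv => measure_mono (Ioi_subset_Ioi huv)
  rw [lintegral_eq_lintegral_meas_lt μ (f := fun x => max (x - t) 0)
      (ae_of_all _ fun x => le_max_right _ _) (by fun_prop),
    setLIntegral_congr_fun measurableSet_Ioi fun s hs => by rw [hlevel s hs],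
    ← (measurePreserving_add_right volume t).setLIntegral_comp_preimage measurableSet_Ioi hmeas]
  simp

lemma integrable_and_integral_eq_of_lintegral_ofReal_eq {α : Type*} [MeasurableSpace α]
    {μ : Measure α} {f : α → ℝ} {c : ℝ} (hf : 0 ≤ᵐ[μ] f) (hfm : AEStronglyMeasurable f μ)
    (hc : 0 ≤ c) (h : ∫⁻ x, ENNReal.ofReal (f x) ∂μ = ENNReal.ofReal c) :
    Integrable f μ ∧ ∫ x, f x ∂μ = c := by
  refine ⟨⟨hfm, (hasFiniteIntegral_iff_ofReal hf).2 (h ▸ ENNReal.ofReal_lt_top)⟩, ?_⟩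
  rw [integral_eq_lintegral_of_nonneg_ae hf hfm, h, ENNReal.toReal_ofReal hc]

namespace ConvexOn

variable {g : ℝ → ℝ} {a c l t x y : ℝ}

lemma differentiableWithinAt_Ioi_of_bddBelow_slope (hg : ConvexOn ℝ (Ici a) g)
    (hb : BddBelow (slope g a '' Ioi a)) : DifferentiableWithinAt ℝ g (Ioi a) a := by
  have hmono : MonotoneOn (slope g a) (Ioi a) :=
    (hg.slope_mono self_mem_Ici).mono fun y (hy : a < y) => ⟨hy.le, hy.ne'⟩
  exact ((hasDerivWithinAt_iff_tendsto_slope' self_notMem_Ioi).2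
    (hmono.tendsto_nhdsGT hb)).differentiableWithinAt

lemma differentiableWithinAt_Ioi (hg : ConvexOn ℝ (Ici a) g)
    (ha : DifferentiableWithinAt ℝ g (Ioi a) a) (hx : a ≤ x) :
    DifferentiableWithinAt ℝ g (Ioi x) x := by
  rcases hx.eq_or_lt with rfl | hx
  · exact ha
  · exact hg.differentiableWithinAt_Ioi_of_mem_interior (by simpa using hx)

lemma slope_le_rightDeriv_of_lt (hg : ConvexOn ℝ (Ici a) g) (hx : a ≤ x) (hxy : x < y) :
    slope g x y ≤ derivWithin g (Ioi y) y := by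
  have hy : y ∈ interior (Ici a) := by simpa using hx.trans_lt hxy
  exact (hg.slope_le_leftDeriv_of_mem_interior hx hy hxy).trans
    (hg.leftDeriv_le_rightDeriv_of_mem_interior hy)

lemma monotoneOn_rightDeriv_Ici (hg : ConvexOn ℝ (Ici a) g)
    (ha : DifferentiableWithinAt ℝ g (Ioi a) a) :
    MonotoneOn (fun x => derivWithin g (Ioi x) x) (Ici a) := by
  intro x hx y _ hxy
  rcases hxy.eq_or_lt with rfl | hxy
  · rfl
  exact (hg.rightDeriv_le_slope hx (hx.out.trans hxy.le) hxy
    (hg.differentiableWithinAt_Ioi ha hx)).trans (hg.slope_le_rightDeriv_of_lt hx hxy)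

lemma le_rightDeriv_of_le_slope (hg : ConvexOn ℝ (Ici a) g)
    (ha : DifferentiableWithinAt ℝ g (Ioi a) a) (hc : ∀ y > a, c ≤ slope g a y) (hx : a ≤ x) :
    c ≤ derivWithin g (Ioi x) x := by
  refine le_trans ?_ (hg.monotoneOn_rightDeriv_Ici ha self_mem_Ici hx hx)
  refine ge_of_tendsto ((hasDerivWithinAt_iff_tendsto_slope' self_notMem_Ioi).1
    ha.hasDerivWithinAt) ?_
  filter_upwards [self_mem_nhdsWithin] with y hy using hc y hy

lemma rightDeriv_nonpos (hg : ConvexOn ℝ (Ici a) g) (ha : DifferentiableWithinAt ℝ g (Ioi a) a)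
    (hlim : Tendsto g atTop (𝓝 l)) (hx : a ≤ x) : derivWithin g (Ioi x) x ≤ 0 := by
  refine ge_of_tendsto (tendsto_slope_atTop_of_tendsto hlim x) ?_
  filter_upwards [eventually_gt_atTop x] with y hy using
    hg.rightDeriv_le_slope hx (hx.trans hy.le) hy (hg.differentiableWithinAt_Ioi ha hx)

lemma tendsto_rightDeriv_atTop (hg : ConvexOn ℝ (Ici a) g)
    (ha : DifferentiableWithinAt ℝ g (Ioi a) a) (hlim : Tendsto g atTop (𝓝 l)) :
    Tendsto (fun x => derivWithin g (Ioi x) x) atTop (𝓝 0) := by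
  refine tendsto_of_tendsto_of_tendsto_of_le_of_le' (tendsto_slope_atTop_of_tendsto hlim a)
    tendsto_const_nhds ?_ ?_
  · filter_upwards [eventually_gt_atTop a] with y hy using hg.slope_le_rightDeriv_of_lt le_rfl hy
  · filter_upwards [eventually_ge_atTop a] with y hy using hg.rightDeriv_nonpos ha hlim hy

lemma continuousWithinAt_rightDeriv (hg : ConvexOn ℝ (Ici a) g)
    (ha : DifferentiableWithinAt ℝ g (Ioi a) a) (hx : a ≤ x) :
    ContinuousWithinAt (fun x => derivWithin g (Ioi x) x) (Ici x) x := by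
  have hdx := hg.differentiableWithinAt_Ioi ha hx
  rw [← continuousWithinAt_Ioi_iff_Ici]
  refine tendsto_order.2 ⟨fun b hb => ?_, fun b hb => ?_⟩
  · filter_upwards [self_mem_nhdsWithin] with y (hy : x < y)
    exact hb.trans_le (hg.monotoneOn_rightDeriv_Ici ha hx (hx.trans hy.le) hy.le)
  -- For `x < y < z`, `g'(y+) ≤ slope g y z`, which tends to `slope g x z < b` as `y ↓ x`.
  obtain ⟨z, hzb, hz : x < z⟩ :=
    (((hasDerivWithinAt_iff_tendsto_slope' self_notMem_Ioi).1 hdx.hasDerivWithinAt).eventually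
      (gt_mem_nhds hb)).and self_mem_nhdsWithin |>.exists
  have hslope : ContinuousWithinAt (fun y => slope g y z) (Ioi x) x := by
    simp only [slope_def_field]
    exact (continuousWithinAt_const.sub hdx.continuousWithinAt).div
      (continuousWithinAt_const.sub continuousWithinAt_id) (sub_ne_zero.2 hz.ne')
  filter_upwards [hslope.eventually (gt_mem_nhds hzb), Ioo_mem_nhdsGT hz] with y hyb hy
  exact (hg.rightDeriv_le_slope (hx.trans hy.1.le) (hx.trans (hy.1.trans hy.2).le) hy.2
    (hg.differentiableWithinAt_Ioi ha (hx.trans hy.1.le))).trans_lt hyb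

lemma integral_Ioi_neg_rightDeriv (hg : ConvexOn ℝ (Ici a) g)
    (ha : DifferentiableWithinAt ℝ g (Ioi a) a) (hlim : Tendsto g atTop (𝓝 l)) (ht : a ≤ t) :
    IntegrableOn (fun x => -derivWithin g (Ioi x) x) (Ioi t) ∧
      ∫ x in Ioi t, -derivWithin g (Ioi x) x = g t - l := by
  have hcont : ContinuousOn g (Ici a) :=
    hg.continuousOn_Ici (continuousWithinAt_Ioi_iff_Ici.1 ha.continuousWithinAt)
  have := integrableOn_Ioi_and_integral_eq_of_hasDeriv_right_of_nonneg
    (hcont.neg.mono (Ici_subset_Ici.2 ht))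
    (fun x hx => (hg.differentiableWithinAt_Ioi ha (ht.trans hx.out.le)).hasDerivWithinAt.neg)
    (fun x hx => neg_nonneg.2 (hg.rightDeriv_nonpos ha hlim (ht.trans hx.out.le))) hlim.neg
  simpa [neg_add_eq_sub] using this

end ConvexOn

/-- For `φ = g'(·+)` this is the distribution function `F` of the paper. -/
noncomputable def tailCDF (φ : ℝ → ℝ) (x : ℝ) : ℝ := if x < 0 then 0 else 1 + φ x

section tailCDF

variable {φ : ℝ → ℝ}

lemma tailCDF_of_neg {x : ℝ} (hx : x < 0) : tailCDF φ x = 0 := if_pos hx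

lemma tailCDF_of_nonneg {x : ℝ} (hx : 0 ≤ x) : tailCDF φ x = 1 + φ x := if_neg hx.not_gt

lemma monotone_tailCDF (hmono : MonotoneOn φ (Ici 0)) (h0 : -1 ≤ φ 0) :
    Monotone (tailCDF φ) := by
  intro x y hxy
  rcases lt_or_ge y 0 with hy | hy
  · rw [tailCDF_of_neg hy, tailCDF_of_neg (hxy.trans_lt hy)]
  rw [tailCDF_of_nonneg hy]
  rcases lt_or_ge x 0 with hx | hx
  · rw [tailCDF_of_neg hx]
    linarith [hmono self_mem_Ici hy hy]
  · rw [tailCDF_of_nonneg hx]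
    linarith [hmono hx hy hxy]

lemma continuousWithinAt_tailCDF (hcont : ∀ x ≥ 0, ContinuousWithinAt φ (Ici x) x) (x : ℝ) :
    ContinuousWithinAt (tailCDF φ) (Ici x) x := by
  rcases lt_or_ge x 0 with hx | hx
  · refine (continuousAt_const (y := (0 : ℝ)).congr ?_).continuousWithinAt
    filter_upwards [Iio_mem_nhds hx] with y hy using (tailCDF_of_neg hy).symm
  · refine (continuousWithinAt_const.add (hcont x hx)).congr (fun y hy => ?_)
      (tailCDF_of_nonneg hx)
    exact tailCDF_of_nonneg (hx.trans hy)

lemma exists_isProbabilityMeasure_measure_Ioi_eq (hmono : MonotoneOn φ (Ici 0))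
    (hcont : ∀ x ≥ 0, ContinuousWithinAt φ (Ici x) x) (h0 : -1 ≤ φ 0)
    (htop : Tendsto φ atTop (𝓝 0)) :
    ∃ μ : Measure ℝ, IsProbabilityMeasure μ ∧ μ (Iio 0) = 0 ∧
      ∀ t ≥ 0, μ (Ioi t) = ENNReal.ofReal (-φ t) := by
  let F : StieltjesFunction ℝ :=
    ⟨tailCDF φ, monotone_tailCDF hmono h0, continuousWithinAt_tailCDF hcont⟩
  have hF : ∀ x, F x = tailCDF φ x := fun _ => rfl
  have hbot : Tendsto F atBot (𝓝 0) := by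
    refine tendsto_const_nhds.congr' ?_
    filter_upwards [eventually_lt_atBot 0] with x hx
    rw [hF, tailCDF_of_neg hx]
  have htop' : Tendsto F atTop (𝓝 1) := by
    have h1 : Tendsto (fun x => 1 + φ x) atTop (𝓝 1) := by
      simpa using tendsto_const_nhds.add htop
    refine h1.congr' ?_
    filter_upwards [eventually_ge_atTop 0] with x hx
    rw [hF, tailCDF_of_nonneg hx]
  refine ⟨F.measure, F.isProbabilityMeasure hbot htop', ?_, fun t ht => ?_⟩
  · rw [F.measure_Iio hbot, sub_zero, ENNReal.ofReal_eq_zero]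
    refine (leftLim_eq_of_tendsto (a := (0 : ℝ)) (tendsto_const_nhds.congr' ?_)).le
    filter_upwards [self_mem_nhdsWithin] with x (hx : x < 0)
    rw [hF, tailCDF_of_neg hx]
  · rw [F.measure_Ioi htop', hF, tailCDF_of_nonneg ht]
    ring_nf

end tailCDF

theorem psi_surjective_general (g : ℝ → ℝ)
    (hconv : ConvexOn ℝ (Set.Ici 0) g)
    (hlim : Tendsto g atTop (nhds 0))
    (hlb : ∀ x ∈ Set.Ici (0:ℝ), g 0 - x ≤ g x) :
    ∃ μ : Measure ℝ, IsProbabilityMeasure μ ∧ μ (Set.Iio 0) = 0 ∧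
      Integrable id μ ∧ ∀ t ∈ Set.Ici (0:ℝ), g t = ∫ x, max (x - t) 0 ∂μ := by
  have hslope : ∀ y > 0, -1 ≤ slope g 0 y := fun y hy => by
    rw [slope_def_field, sub_zero, le_div_iff₀ hy]
    linarith [hlb y hy.le]
  have hd0 : DifferentiableWithinAt ℝ g (Ioi 0) 0 :=
    hconv.differentiableWithinAt_Ioi_of_bddBelow_slope
      ⟨-1, by rintro _ ⟨y, hy, rfl⟩; exact hslope y hy⟩
  obtain ⟨μ, hμ, hneg, hIoi⟩ := exists_isProbabilityMeasure_measure_Ioi_eq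
    (hconv.monotoneOn_rightDeriv_Ici hd0) (fun x hx => hconv.continuousWithinAt_rightDeriv hd0 hx)
    (hconv.le_rightDeriv_of_le_slope hd0 hslope le_rfl) (hconv.tendsto_rightDeriv_atTop hd0 hlim)
  have hpsi : ∀ t ≥ 0, Integrable (fun x => max (x - t) 0) μ ∧ ∫ x, max (x - t) 0 ∂μ = g t := by
    intro t ht
    obtain ⟨hint, heq⟩ := hconv.integral_Ioi_neg_rightDeriv hd0 hlim ht
    rw [sub_zero] at heq
    have hpos : 0 ≤ᵐ[volume.restrict (Ioi t)] fun u => -derivWithin g (Ioi u) u :=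
      (ae_restrict_iff' measurableSet_Ioi).2 <| ae_of_all _ fun u hu =>
        neg_nonneg.2 (hconv.rightDeriv_nonpos hd0 hlim (ht.trans hu.out.le))
    refine integrable_and_integral_eq_of_lintegral_ofReal_eq
      (ae_of_all _ fun x => le_max_right _ _) (by fun_prop) (heq ▸ integral_nonneg_of_ae hpos) ?_
    rw [lintegral_ofReal_max_sub_eq_lintegral_measure_Ioi, ← heq,
      ofReal_integral_eq_lintegral_ofReal hint hpos]
    exact setLIntegral_congr_fun measurableSet_Ioi fun u hu => hIoi u (ht.trans hu.out.le)
  refine ⟨μ, hμ, hneg, (hpsi 0 le_rfl).1.congr ?_, fun t ht => (hpsi t ht).2.symm⟩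
  filter_upwards [measure_eq_zero_iff_ae_notMem.1 hneg] with x hx
  simp [show 0 ≤ x by simpa using hx]

/-- Every nonnegative, nonincreasing, convex function `g` on `[0,∞)` tending to `0` at
infinity and satisfying `g(x) ≥ g(0) - x` is the transform `Ψ_Π` of some probability
measure `Π` on `[0,∞)` with finite expectation. -/
theorem psi_surjective (g : ℝ → ℝ)
    (hnn : ∀ x ∈ Set.Ici (0:ℝ), 0 ≤ g x)
    (hanti : AntitoneOn g (Set.Ici 0))
    (hconv : ConvexOn ℝ (Set.Ici 0) g)
    (hlim : Tendsto g atTop (nhds 0))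
    (hlb : ∀ x ∈ Set.Ici (0:ℝ), g 0 - x ≤ g x) :
    ∃ μ : Measure ℝ, IsProbabilityMeasure μ ∧ μ (Set.Iio 0) = 0 ∧
      Integrable id μ ∧ ∀ t ∈ Set.Ici (0:ℝ), g t = ∫ x, max (x - t) 0 ∂μ :=
  psi_surjective_general g hconv hlim hlb
end

section
/- Define the relation Π₁ ℛ Π₂ on probability laws on [0,∞) with finite expectation by: there exist random variables X₁, X₂ on a common probability space forming a martingale with X₁ ~ Π₁, X₂ ~ Π₂. If Π₁ ℛ Π₂ and Π₂ ℛ Π₁, then Π₁ = Π₂ (antisymmetry). -/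
open MeasureTheory Set

/-- `MartRel μ₁ μ₂` holds iff there is a martingale pair `(X₁, X₂)` on some probability
space with `X₁ ~ μ₁` and `X₂ ~ μ₂`. -/
def MartRel (μ₁ μ₂ : Measure ℝ) : Prop :=
  ∃ (Ω : Type) (_ : MeasurableSpace Ω) (P : Measure Ω), IsProbabilityMeasure P ∧
    ∃ X₁ X₂ : Ω → ℝ, Measurable X₁ ∧ Measurable X₂ ∧
      Integrable X₁ P ∧ Integrable X₂ P ∧
      P.map X₁ = μ₁ ∧ P.map X₂ = μ₂ ∧
      P[X₂ | MeasurableSpace.comap X₁ Real.measurableSpace] =ᵐ[P] X₁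

/-- Core lemma: for a martingale pair of nonnegative random variables, the expectation of
`exp (-x)` increases, and equality forces the variables to coincide a.e. -/
lemma mart_exp_aux {Ω : Type} [mΩ : MeasurableSpace Ω] (P : Measure Ω) [IsProbabilityMeasure P]
    (X₁ X₂ : Ω → ℝ) (hX₁ : Measurable X₁) (hX₂ : Measurable X₂)
    (hi₁ : Integrable X₁ P) (hi₂ : Integrable X₂ P)
    (hpos₁ : 0 ≤ᵐ[P] X₁) (hpos₂ : 0 ≤ᵐ[P] X₂)
    (hmart : P[X₂ | MeasurableSpace.comap X₁ Real.measurableSpace] =ᵐ[P] X₁) :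
    (∫ ω, Real.exp (-(X₁ ω)) ∂P ≤ ∫ ω, Real.exp (-(X₂ ω)) ∂P) ∧
    (∫ ω, Real.exp (-(X₁ ω)) ∂P = ∫ ω, Real.exp (-(X₂ ω)) ∂P → X₁ =ᵐ[P] X₂) := by
  have hm : MeasurableSpace.comap X₁ Real.measurableSpace ≤ mΩ := hX₁.comap_le
  set g : Ω → ℝ := fun ω => Real.exp (-(X₁ ω)) with hg_def
  have hX₁m : Measurable[MeasurableSpace.comap X₁ Real.measurableSpace] X₁ :=
    measurable_iff_comap_le.mpr le_rfl
  have hgm : StronglyMeasurable[MeasurableSpace.comap X₁ Real.measurableSpace] g :=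
    ((Real.measurable_exp.comp measurable_neg).comp hX₁m).stronglyMeasurable
  have hg_meas : Measurable g := (Real.measurable_exp.comp measurable_neg).comp hX₁
  have hg_bound : ∀ᵐ ω ∂P, ‖g ω‖ ≤ 1 := by
    filter_upwards [hpos₁] with ω hω
    simp only [Pi.zero_apply] at hω
    rw [Real.norm_eq_abs, abs_of_pos (Real.exp_pos _)]
    exact Real.exp_le_one_iff.mpr (by simpa using hω)
  have he2_meas : Measurable fun ω => Real.exp (-(X₂ ω)) :=
    (Real.measurable_exp.comp measurable_neg).comp hX₂
  have he2_bound : ∀ᵐ ω ∂P, ‖Real.exp (-(X₂ ω))‖ ≤ 1 := by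
    filter_upwards [hpos₂] with ω hω
    simp only [Pi.zero_apply] at hω
    rw [Real.norm_eq_abs, abs_of_pos (Real.exp_pos _)]
    exact Real.exp_le_one_iff.mpr (by simpa using hω)
  -- integrability facts
  have hgi : Integrable g P :=
    Integrable.mono' (integrable_const 1) hg_meas.aestronglyMeasurable hg_bound
  have he2 : Integrable (fun ω => Real.exp (-(X₂ ω))) P :=
    Integrable.mono' (integrable_const 1) he2_meas.aestronglyMeasurable he2_bound
  have hg2 : Integrable (g * X₂) P := by
    refine Integrable.mono hi₂ (hg_meas.mul hX₂).aestronglyMeasurable ?_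
    filter_upwards [hg_bound] with ω hω
    simp only [Pi.mul_apply, norm_mul]
    calc ‖g ω‖ * ‖X₂ ω‖ ≤ 1 * ‖X₂ ω‖ := mul_le_mul_of_nonneg_right hω (norm_nonneg _)
      _ = ‖X₂ ω‖ := one_mul _
  have hg1 : Integrable (fun ω => g ω * X₁ ω) P := by
    refine Integrable.mono hi₁ (hg_meas.mul hX₁).aestronglyMeasurable ?_
    filter_upwards [hg_bound] with ω hω
    rw [norm_mul]
    calc ‖g ω‖ * ‖X₁ ω‖ ≤ 1 * ‖X₁ ω‖ := mul_le_mul_of_nonneg_right hω (norm_nonneg _)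
      _ = ‖X₁ ω‖ := one_mul _
  -- key martingale computation
  have key : ∫ ω, g ω * X₂ ω ∂P = ∫ ω, g ω * X₁ ω ∂P := by
    have hpull := condExp_mul_of_stronglyMeasurable_left hgm hg2 hi₂
    calc ∫ ω, g ω * X₂ ω ∂P = ∫ ω, (P[g * X₂ | MeasurableSpace.comap X₁ Real.measurableSpace]) ω ∂P :=
          (integral_condExp hm (f := g * X₂)).symm
      _ = ∫ ω, g ω * (P[X₂ | MeasurableSpace.comap X₁ Real.measurableSpace]) ω ∂P :=
          integral_congr_ae hpull
      _ = ∫ ω, g ω * X₁ ω ∂P := by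
          refine integral_congr_ae ?_
          filter_upwards [hmart] with ω h
          simp only [Pi.mul_apply, h]
  -- the nonnegative defect function
  set h : Ω → ℝ := fun ω =>
    Real.exp (-(X₂ ω)) - Real.exp (-(X₁ ω)) + (g ω * X₂ ω - g ω * X₁ ω) with hh_def
  have hexp_rel : ∀ ω, Real.exp (-(X₂ ω)) = Real.exp (-(X₁ ω)) * Real.exp (X₁ ω - X₂ ω) := by
    intro ω; rw [← Real.exp_add]; ring_nf
  have hh_nonneg : ∀ ω, 0 ≤ h ω := by
    intro ω
    have h1 : (X₁ ω - X₂ ω) + 1 ≤ Real.exp (X₁ ω - X₂ ω) := Real.add_one_le_exp _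
    have h2 := hexp_rel ω
    have h3 : (0:ℝ) < Real.exp (-(X₁ ω)) := Real.exp_pos _
    simp only [hh_def, hg_def]
    nlinarith
  have hh_int : Integrable h P := (he2.sub hgi).add (hg2.sub hg1)
  have hh_integral : ∫ ω, h ω ∂P
      = ∫ ω, Real.exp (-(X₂ ω)) ∂P - ∫ ω, Real.exp (-(X₁ ω)) ∂P := by
    have e1 : ∫ ω, h ω ∂P
        = (∫ ω, (Real.exp (-(X₂ ω)) - g ω) ∂P) + ∫ ω, (g ω * X₂ ω - g ω * X₁ ω) ∂P :=
      integral_add (he2.sub hgi) (hg2.sub hg1)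
    have e2 : ∫ ω, (Real.exp (-(X₂ ω)) - g ω) ∂P
        = (∫ ω, Real.exp (-(X₂ ω)) ∂P) - ∫ ω, g ω ∂P := integral_sub he2 hgi
    have e3 : ∫ ω, (g ω * X₂ ω - g ω * X₁ ω) ∂P
        = (∫ ω, g ω * X₂ ω ∂P) - ∫ ω, g ω * X₁ ω ∂P := integral_sub hg2 hg1
    rw [e1, e2, e3, key]
    ring
  constructor
  · have h0 : 0 ≤ ∫ ω, h ω ∂P := integral_nonneg hh_nonneg
    linarith [hh_integral ▸ h0]
  · intro heq
    have h0 : ∫ ω, h ω ∂P = 0 := by rw [hh_integral, heq]; ring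
    have hzero : h =ᵐ[P] 0 :=
      (integral_eq_zero_iff_of_nonneg hh_nonneg hh_int).mp h0
    filter_upwards [hzero] with ω hω
    simp only [Pi.zero_apply] at hω
    by_contra hne
    have h1 : (X₁ ω - X₂ ω) + 1 < Real.exp (X₁ ω - X₂ ω) :=
      Real.add_one_lt_exp (sub_ne_zero.mpr hne)
    have h2 := hexp_rel ω
    have h3 : (0:ℝ) < Real.exp (-(X₁ ω)) := Real.exp_pos _
    simp only [hh_def, hg_def] at hω
    nlinarith

lemma ae_nonneg_of_map {Ω : Type} [mΩ : MeasurableSpace Ω] {P : Measure Ω} {X : Ω → ℝ}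
    (hX : Measurable X) {μ : Measure ℝ} (hmap : P.map X = μ) (hsupp : μ (Set.Iio 0) = 0) :
    0 ≤ᵐ[P] X := by
  have : P (X ⁻¹' Set.Iio 0) = 0 := by
    rw [← Measure.map_apply hX measurableSet_Iio, hmap]; exact hsupp
  refine (ae_iff.mpr ?_)
  convert this using 2
  ext ω
  simp [Set.mem_preimage, not_le]

/-- Antisymmetry of the martingale relation: if `Π₁ ℛ Π₂` and `Π₂ ℛ Π₁` then `Π₁ = Π₂`. -/
theorem martRel_antisymm (μ₁ μ₂ : Measure ℝ)
    [IsProbabilityMeasure μ₁] [IsProbabilityMeasure μ₂]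
    (hsupp₁ : μ₁ (Set.Iio 0) = 0) (hsupp₂ : μ₂ (Set.Iio 0) = 0)
    (hint₁ : Integrable id μ₁) (hint₂ : Integrable id μ₂)
    (h₁₂ : MartRel μ₁ μ₂) (h₂₁ : MartRel μ₂ μ₁) :
    μ₁ = μ₂ := by
  obtain ⟨Ω, mΩ, P, hP, X₁, X₂, hX₁, hX₂, hi₁, hi₂, hmap₁, hmap₂, hmart⟩ := h₁₂
  obtain ⟨Ω', mΩ', P', hP', Y₁, Y₂, hY₁, hY₂, hj₁, hj₂, hmap₁', hmap₂', hmart'⟩ := h₂₁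
  have hposX₁ := ae_nonneg_of_map hX₁ hmap₁ hsupp₁
  have hposX₂ := ae_nonneg_of_map hX₂ hmap₂ hsupp₂
  have hposY₁ := ae_nonneg_of_map hY₁ hmap₁' hsupp₂
  have hposY₂ := ae_nonneg_of_map hY₂ hmap₂' hsupp₁
  have auxX := mart_exp_aux P X₁ X₂ hX₁ hX₂ hi₁ hi₂ hposX₁ hposX₂ hmart
  have auxY := mart_exp_aux P' Y₁ Y₂ hY₁ hY₂ hj₁ hj₂ hposY₁ hposY₂ hmart'
  -- identify the integrals of exp (-x) against the laws
  have hmeas_exp : Measurable fun x : ℝ => Real.exp (-x) :=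
    Real.measurable_exp.comp measurable_neg
  have eX₁ : ∫ x, Real.exp (-x) ∂μ₁ = ∫ ω, Real.exp (-(X₁ ω)) ∂P := by
    rw [← hmap₁, integral_map hX₁.aemeasurable hmeas_exp.aestronglyMeasurable]
  have eX₂ : ∫ x, Real.exp (-x) ∂μ₂ = ∫ ω, Real.exp (-(X₂ ω)) ∂P := by
    rw [← hmap₂, integral_map hX₂.aemeasurable hmeas_exp.aestronglyMeasurable]
  have eY₁ : ∫ x, Real.exp (-x) ∂μ₂ = ∫ ω, Real.exp (-(Y₁ ω)) ∂P' := by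
    rw [← hmap₁', integral_map hY₁.aemeasurable hmeas_exp.aestronglyMeasurable]
  have eY₂ : ∫ x, Real.exp (-x) ∂μ₁ = ∫ ω, Real.exp (-(Y₂ ω)) ∂P' := by
    rw [← hmap₂', integral_map hY₂.aemeasurable hmeas_exp.aestronglyMeasurable]
  have heq : ∫ ω, Real.exp (-(X₁ ω)) ∂P = ∫ ω, Real.exp (-(X₂ ω)) ∂P := by
    have h1 := auxX.1
    have h2 := auxY.1
    rw [← eX₁, ← eX₂] at h1
    rw [← eY₁, ← eY₂] at h2
    have : ∫ x, Real.exp (-x) ∂μ₁ = ∫ x, Real.exp (-x) ∂μ₂ := le_antisymm h1 h2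
    rw [← eX₁, ← eX₂, this]
  have hXeq : X₁ =ᵐ[P] X₂ := auxX.2 heq
  rw [← hmap₁, ← hmap₂]
  exact Measure.map_congr hXeq
end

section
/- The relation ℛ on probability laws on [0,∞) with finite expectation, defined by Π₁ ℛ Π₂ iff there exists a martingale (X₁, X₂) with marginals Π₁ and Π₂, is transitive: if Π₁ ℛ Π₂ and Π₂ ℛ Π₃, then Π₁ ℛ Π₃. -/
/-!
Let `(X₁, X₂)` realise `Π₁ ℛ Π₂` and let `κ` be the conditional law of `X₃` given `X₂` in a
martingale realising `Π₂ ℛ Π₃`; the martingale property says that `κ x` has mean `x` for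
`Π₂`-a.e. `x`, and `κ ∘ Π₂ = Π₃`. Drawing `Z ~ κ X₂` on top of `(X₁, X₂)`, conditionally on
`X₂` and independently of `X₁`, gives `E[Z | X₁] = E[X₂ | X₁] = X₁`, so `(X₁, Z)` realises
`Π₁ ℛ Π₃`.
-/

open MeasureTheory Set

open ProbabilityTheory

section Martingale

variable {Ω : Type*} [MeasurableSpace Ω] {P : Measure Ω} {X Y : Ω → ℝ}

lemma condExp_comap_ae_eq_iff_setIntegral_preimage_eq [IsFiniteMeasure P] (hX : Measurable X)
    (hiX : Integrable X P) (hiY : Integrable Y P) :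
    P[Y | MeasurableSpace.comap X Real.measurableSpace] =ᵐ[P] X ↔
      ∀ t, MeasurableSet t → ∫ ω in X ⁻¹' t, Y ω ∂P = ∫ ω in X ⁻¹' t, X ω ∂P := by
  constructor
  · rintro h t ht
    rw [← setIntegral_condExp hX.comap_le hiY ⟨t, ht, rfl⟩]
    exact setIntegral_congr_ae (hX ht) (by filter_upwards [h] with ω hω _ using hω)
  · intro h
    refine (ae_eq_condExp_of_forall_setIntegral_eq hX.comap_le hiY
      (fun _ _ _ ↦ hiX.integrableOn) ?_ ?_).symm
    · rintro _ ⟨t, ht, rfl⟩ _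
      exact (h t ht).symm
    · exact (comap_measurable X).stronglyMeasurable.aestronglyMeasurable

lemma ae_integral_condDistrib_eq_of_condExp_comap_ae_eq [IsFiniteMeasure P] (hX : Measurable X)
    (hiY : Integrable Y P) (h : P[Y | MeasurableSpace.comap X Real.measurableSpace] =ᵐ[P] X) :
    ∀ᵐ x ∂(P.map X), ∫ y, y ∂(condDistrib Y X P x) = x := by
  have hmeas : MeasurableSet {x : ℝ | ∫ y, y ∂(condDistrib Y X P x) = x} :=
    measurableSet_eq_fun stronglyMeasurable_id.integral_kernel.measurable measurable_id
  rw [ae_map_iff hX.aemeasurable hmeas]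
  filter_upwards [condExp_ae_eq_integral_condDistrib' hX hiY, h] with ω hκ hω
  rw [← hκ, hω]

end Martingale

section Gluing

variable {Ω : Type*} [MeasurableSpace Ω] (P : Measure Ω) [SFinite P]
  {f : Ω → ℝ} (hf : Measurable f) (κ : Kernel ℝ ℝ) [IsSFiniteKernel κ]

lemma snd_compProd_comap : (P ⊗ₘ κ.comap f hf).snd = κ ∘ₘ P.map f := by
  rw [Measure.snd_compProd, ← Kernel.comp_deterministic_eq_comap, ← Measure.comp_assoc,
    Measure.deterministic_comp_eq_map]

lemma setIntegral_snd_compProd_comap_of_ae_integral_eq (hint : Integrable id (κ ∘ₘ P.map f))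
    (hκ : ∀ᵐ x ∂(P.map f), ∫ y, y ∂κ x = x) {A : Set Ω} (hA : MeasurableSet A) :
    ∫ p in Prod.fst ⁻¹' A, p.2 ∂(P ⊗ₘ κ.comap f hf) = ∫ ω in A, f ω ∂P := by
  have hint_snd : Integrable Prod.snd (P ⊗ₘ κ.comap f hf) := by
    rw [← snd_compProd_comap P hf κ] at hint
    exact hint.comp_measurable measurable_snd
  rw [← prod_univ, Measure.setIntegral_compProd hA MeasurableSet.univ hint_snd.integrableOn]
  refine setIntegral_congr_ae hA ?_
  filter_upwards [ae_of_ae_map hf.aemeasurable hκ] with ω hω _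
  rw [Measure.restrict_univ, Kernel.comap_apply, hω]

end Gluing

lemma MartRel.exists_kernel {μ₁ μ₂ : Measure ℝ} (h : MartRel μ₁ μ₂) :
    ∃ κ : Kernel ℝ ℝ, IsMarkovKernel κ ∧ κ ∘ₘ μ₁ = μ₂ ∧ ∀ᵐ x ∂μ₁, ∫ y, y ∂κ x = x := by
  obtain ⟨Ω, _, P, _, X₁, X₂, hX₁, hX₂, -, hi₂, rfl, rfl, hmart⟩ := h
  exact ⟨condDistrib X₂ X₁ P, inferInstance,
    condDistrib_comp_map hX₁.aemeasurable hX₂.aemeasurable,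
    ae_integral_condDistrib_eq_of_condExp_comap_ae_eq hX₁ hi₂ hmart⟩

theorem MartRel.comp_kernel {μ₁ μ₂ : Measure ℝ} (h : MartRel μ₁ μ₂) (κ : Kernel ℝ ℝ)
    [IsMarkovKernel κ] (hκ : ∀ᵐ x ∂μ₂, ∫ y, y ∂κ x = x) (hint : Integrable id (κ ∘ₘ μ₂)) :
    MartRel μ₁ (κ ∘ₘ μ₂) := by
  obtain ⟨Ω, _, P, _, X₁, X₂, hX₁, hX₂, hi₁, hi₂, rfl, rfl, hmart⟩ := h
  set Q := P ⊗ₘ κ.comap X₂ hX₂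
  have hQ_fst : Q.map Prod.fst = P := Measure.fst_compProd P _
  have hQ_snd : Q.map Prod.snd = κ ∘ₘ P.map X₂ := snd_compProd_comap P hX₂ κ
  have hZ₁ : Measurable fun p : Ω × ℝ ↦ X₁ p.1 := hX₁.comp measurable_fst
  have hiZ₁ : Integrable (fun p : Ω × ℝ ↦ X₁ p.1) Q :=
    (hQ_fst ▸ hi₁).comp_measurable measurable_fst
  have hiZ₃ : Integrable Prod.snd Q := (hQ_snd ▸ hint).comp_measurable measurable_snd
  refine ⟨Ω × ℝ, inferInstance, Q, inferInstance, fun p ↦ X₁ p.1, Prod.snd, hZ₁, measurable_snd,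
    hiZ₁, hiZ₃, by rw [← hQ_fst, Measure.map_map hX₁ measurable_fst]; rfl, hQ_snd, ?_⟩
  rw [condExp_comap_ae_eq_iff_setIntegral_preimage_eq hZ₁ hiZ₁ hiZ₃]
  intro t ht
  calc ∫ p in Prod.fst ⁻¹' (X₁ ⁻¹' t), p.2 ∂Q
      = ∫ ω in X₁ ⁻¹' t, X₂ ω ∂P :=
        setIntegral_snd_compProd_comap_of_ae_integral_eq P hX₂ κ hint hκ (hX₁ ht)
    _ = ∫ ω in X₁ ⁻¹' t, X₁ ω ∂P :=
        (condExp_comap_ae_eq_iff_setIntegral_preimage_eq hX₁ hi₁ hi₂).mp hmart t ht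
    _ = ∫ p in Prod.fst ⁻¹' (X₁ ⁻¹' t), X₁ p.1 ∂Q := by
        conv_lhs => rw [← hQ_fst]
        exact setIntegral_map (hX₁ ht) hX₁.aestronglyMeasurable measurable_fst.aemeasurable

theorem martRel_trans_general (μ₁ μ₂ μ₃ : Measure ℝ) (hint₃ : Integrable id μ₃)
    (h₁₂ : MartRel μ₁ μ₂) (h₂₃ : MartRel μ₂ μ₃) :
    MartRel μ₁ μ₃ := by
  obtain ⟨κ, _, rfl, hκ⟩ := h₂₃.exists_kernel
  exact h₁₂.comp_kernel κ hκ hint₃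

/-- Transitivity of the martingale relation: if `Π₁ ℛ Π₂` and `Π₂ ℛ Π₃` then `Π₁ ℛ Π₃`. -/
theorem martRel_trans (μ₁ μ₂ μ₃ : Measure ℝ)
    [IsProbabilityMeasure μ₁] [IsProbabilityMeasure μ₂] [IsProbabilityMeasure μ₃]
    (hsupp₁ : μ₁ (Set.Iio 0) = 0) (hsupp₂ : μ₂ (Set.Iio 0) = 0) (hsupp₃ : μ₃ (Set.Iio 0) = 0)
    (hint₁ : Integrable id μ₁) (hint₂ : Integrable id μ₂) (hint₃ : Integrable id μ₃)
    (h₁₂ : MartRel μ₁ μ₂) (h₂₃ : MartRel μ₂ μ₃) :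
    MartRel μ₁ μ₃ :=
  martRel_trans_general μ₁ μ₂ μ₃ hint₃ h₁₂ h₂₃
end

section
/- Let (X₁, ..., Xₙ) be a martingale with values in ℝ^d, and let μᵢ be the marginal law of Xᵢ. Then there exists a Markov martingale (X̃₁, ..., X̃ₙ) (a process that is both a Markov chain and a martingale) such that X̃ᵢ has law μᵢ for all i = 1, ..., n. -/
open MeasureTheory Set

/-!
Replace the martingale by the Markov chain with the same initial law and the same one-step
transition kernels `κᵢ = L(Xᵢ₊₁ | Xᵢ)`, which exists by the Ionescu-Tulcea theorem. Its marginals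
are those of `X` by induction, since `κᵢ ∘ L(Xᵢ) = L(Xᵢ₊₁)`. Given the past of the chain up to
time `i`, its next state has law `κᵢ(X̃ᵢ)`; this depends on `X̃ᵢ` only, which is the Markov
property, and the martingale property of `X` says exactly that `κᵢ(x)` has barycenter `x` for
`L(Xᵢ)`-almost every `x`.
-/

open ProbabilityTheory Preorder

section CondExp

variable {α F : Type*} {m₁ m₂ m₀ : MeasurableSpace α} {μ : Measure α} [IsFiniteMeasure μ]
  [NormedAddCommGroup F] [NormedSpace ℝ F] [CompleteSpace F]

theorem condExp_ae_eq_of_le_of_condExp_ae_eq (hm₁₂ : m₁ ≤ m₂) (hm₂ : m₂ ≤ m₀) {f g : α → F}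
    (hg : AEStronglyMeasurable[m₁] g μ) (hgi : Integrable g μ) (h : μ[f | m₂] =ᵐ[μ] g) :
    μ[f | m₁] =ᵐ[μ] g :=
  (condExp_condExp_of_le hm₁₂ hm₂).symm.trans
    ((condExp_congr_ae h).trans (condExp_of_aestronglyMeasurable' (hm₁₂.trans hm₂) hg hgi))

variable [MeasurableSpace F] [BorelSpace F] [SecondCountableTopology F]

theorem ae_integral_condDistrib_eq_self_of_condExp_ae_eq {X Y : α → F} (hX : Measurable[m₀] X)
    (hXi : Integrable X μ) (hYi : Integrable Y μ) (h : μ[Y | m₁] =ᵐ[μ] X)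
    (hXm : MeasurableSpace.comap X ‹_› ≤ m₁) (hm₁ : m₁ ≤ m₀) :
    ∀ᵐ x ∂μ.map X, ∫ y, y ∂condDistrib Y X μ x = x := by
  have hYX : μ[Y | MeasurableSpace.comap X ‹_›] =ᵐ[μ] X :=
    condExp_ae_eq_of_le_of_condExp_ae_eq hXm hm₁
      (comap_measurable X).stronglyMeasurable.aestronglyMeasurable hXi h
  have hmean : Measurable fun x ↦ ∫ y, y ∂condDistrib Y X μ x :=
    stronglyMeasurable_id.integral_kernel.measurable
  exact (ae_map_iff hX.aemeasurable (measurableSet_eq_fun hmean measurable_id)).2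
    ((condExp_ae_eq_integral_condDistrib' hX hYi).symm.trans hYX)

end CondExp

namespace ProbabilityTheory.Kernel

variable {X : ℕ → Type*} [∀ n, MeasurableSpace (X n)]
  {κ : (n : ℕ) → Kernel (Π i : Finset.Iic n, X i) (X (n + 1))} [∀ n, IsMarkovKernel (κ n)]
  {μ₀ : Measure (X 0)}

lemma map_eval_zero_trajMeasure : (trajMeasure μ₀ κ).map (fun x ↦ x 0) = μ₀ := by
  have hf : (fun x : Π n, X n ↦ x 0) =
      (fun x ↦ x ⟨0, Finset.mem_Iic.2 le_rfl⟩) ∘ frestrictLe 0 := rfl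
  rw [trajMeasure, Measure.map_comp _ _ (by fun_prop), hf,
    map_comp_right _ (measurable_frestrictLe 0) (measurable_pi_apply _), traj_map_frestrictLe,
    partialTraj_self, Kernel.id_map (measurable_pi_apply _), Measure.deterministic_comp_eq_map]
  ext s hs
  exact (Measure.map_apply (measurable_pi_apply (X := fun i : Finset.Iic 0 ↦ X i)
    ⟨0, Finset.mem_Iic.2 le_rfl⟩) hs).trans (MeasurableEquiv.map_apply _ _)

variable [IsProbabilityMeasure μ₀]

lemma map_eval_succ_trajMeasure (a : ℕ) :
    (trajMeasure μ₀ κ).map (fun x ↦ x (a + 1))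
      = κ a ∘ₘ (trajMeasure μ₀ κ).map (frestrictLe a) := by
  rw [← Measure.snd_compProd, map_frestrictLe_trajMeasure_compProd_eq_map_trajMeasure,
    Measure.snd_map_prodMk (measurable_frestrictLe a)]

theorem condExp_comp_eval_succ_trajMeasure {F : Type*} [NormedAddCommGroup F] [NormedSpace ℝ F]
    [CompleteSpace F] (a : ℕ) [StandardBorelSpace (X (a + 1))] [Nonempty (X (a + 1))]
    {f : X (a + 1) → F} (hf : StronglyMeasurable f)
    (hfi : Integrable (fun x ↦ f (x (a + 1))) (trajMeasure μ₀ κ)) :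
    (trajMeasure μ₀ κ)[fun x ↦ f (x (a + 1)) | MeasurableSpace.comap (frestrictLe a) inferInstance]
      =ᵐ[trajMeasure μ₀ κ] fun x ↦ ∫ y, f y ∂κ a (frestrictLe a x) := by
  filter_upwards [condExp_ae_eq_integral_condDistrib (measurable_frestrictLe a)
    (measurable_pi_apply _).aemeasurable hf hfi,
    ae_of_ae_map (measurable_frestrictLe a).aemeasurable condDistrib_trajMeasure] with x hx hκ
  rw [hx, hκ]

end ProbabilityTheory.Kernel

lemma iSup_comap_eval_le_eq_comap_frestrictLe {X : ℕ → Type*} [∀ n, MeasurableSpace (X n)]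
    {n : ℕ} (i : Fin n) :
    (⨆ j : Fin n, ⨆ _ : j ≤ i, MeasurableSpace.comap (fun x : Π k, X k ↦ x j) inferInstance)
      = MeasurableSpace.comap (frestrictLe (i : ℕ)) inferInstance := by
  rw [show frestrictLe (π := X) (i : ℕ) = fun x j ↦ x j from rfl,
    MeasurableSpace.comap_process_pi]
  apply le_antisymm
  · refine iSup₂_le fun j hj ↦ le_iSup_of_le ⟨j, Finset.mem_Iic.2 hj⟩ le_rfl
  · refine iSup_le fun j ↦ ?_
    have hj : (j : ℕ) ≤ i := Finset.mem_Iic.1 j.2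
    exact le_iSup₂_of_le (⟨j, by omega⟩ : Fin n) (Fin.le_def.2 hj) le_rfl

namespace ProbabilityTheory

variable {E : Type*} [MeasurableSpace E]

noncomputable def markovChainMeasure (μ₀ : Measure E) (κ : ℕ → Kernel E E)
    [∀ n, IsMarkovKernel (κ n)] : Measure (ℕ → E) :=
  Kernel.trajMeasure (X := fun _ ↦ E) μ₀ fun n ↦
    (κ n).comap (fun x ↦ x ⟨n, Finset.mem_Iic.2 le_rfl⟩) (measurable_pi_apply _)

variable {μ₀ : Measure E} {κ : ℕ → Kernel E E} [∀ n, IsMarkovKernel (κ n)]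

instance [IsProbabilityMeasure μ₀] : IsProbabilityMeasure (markovChainMeasure μ₀ κ) := by
  unfold markovChainMeasure; infer_instance

lemma map_eval_succ_markovChainMeasure [IsProbabilityMeasure μ₀] (a : ℕ) :
    (markovChainMeasure μ₀ κ).map (fun x ↦ x (a + 1))
      = κ a ∘ₘ (markovChainMeasure μ₀ κ).map (fun x ↦ x a) := by
  rw [markovChainMeasure, Kernel.map_eval_succ_trajMeasure, ← Kernel.comp_deterministic_eq_comap,
    ← Measure.comp_assoc, Measure.deterministic_comp_eq_map]
  congr 1
  ext s hs
  rw [Measure.map_apply (by fun_prop) hs, Measure.map_apply (by fun_prop) hs,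
    Measure.map_apply (by fun_prop) (measurable_pi_apply _ hs)]
  rfl

theorem map_eval_markovChainMeasure_condDistrib [StandardBorelSpace E] [Nonempty E]
    {Ω : Type*} [MeasurableSpace Ω] {P : Measure Ω} [IsProbabilityMeasure P] {Z : ℕ → Ω → E}
    (hZ : ∀ n, Measurable (Z n)) (n : ℕ) :
    (markovChainMeasure (P.map (Z 0)) fun k ↦ condDistrib (Z (k + 1)) (Z k) P).map
      (fun x ↦ x n) = P.map (Z n) := by
  have := Measure.isProbabilityMeasure_map (μ := P) (hZ 0).aemeasurable
  induction n with
  | zero => exact Kernel.map_eval_zero_trajMeasure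
  | succ n ih =>
    rw [map_eval_succ_markovChainMeasure, ih,
      condDistrib_comp_map (hZ n).aemeasurable (hZ (n + 1)).aemeasurable]

variable [IsProbabilityMeasure μ₀]

theorem condExp_comp_eval_succ_markovChainMeasure [StandardBorelSpace E] [Nonempty E]
    {F : Type*} [NormedAddCommGroup F] [NormedSpace ℝ F] [CompleteSpace F] (a : ℕ) {f : E → F}
    (hf : StronglyMeasurable f)
    (hfi : Integrable (fun x ↦ f (x (a + 1))) (markovChainMeasure μ₀ κ)) :
    (markovChainMeasure μ₀ κ)[fun x ↦ f (x (a + 1)) |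
        MeasurableSpace.comap (frestrictLe a) inferInstance]
      =ᵐ[markovChainMeasure μ₀ κ] fun x ↦ ∫ y, f y ∂κ a (x a) :=
  Kernel.condExp_comp_eval_succ_trajMeasure a hf hfi

theorem condExp_comp_eval_succ_markovChainMeasure_eq_condExp_eval [StandardBorelSpace E]
    [Nonempty E] {F : Type*} [NormedAddCommGroup F] [NormedSpace ℝ F] [CompleteSpace F] (a : ℕ)
    {f : E → F} (hf : StronglyMeasurable f)
    (hfi : Integrable (fun x ↦ f (x (a + 1))) (markovChainMeasure μ₀ κ)) :
    (markovChainMeasure μ₀ κ)[fun x ↦ f (x (a + 1)) |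
        MeasurableSpace.comap (frestrictLe a) inferInstance]
      =ᵐ[markovChainMeasure μ₀ κ] (markovChainMeasure μ₀ κ)[fun x ↦ f (x (a + 1)) |
        MeasurableSpace.comap (fun x ↦ x a) inferInstance] := by
  have hpast := condExp_comp_eval_succ_markovChainMeasure a hf hfi
  refine hpast.trans (condExp_ae_eq_of_le_of_condExp_ae_eq ?_ (measurable_frestrictLe a).comap_le
    ?_ (integrable_condExp.congr hpast) hpast).symm
  · exact ((measurable_pi_apply (⟨a, Finset.mem_Iic.2 le_rfl⟩ : Finset.Iic a)).comp
      (comap_measurable (frestrictLe a))).comap_le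
  · exact (hf.integral_kernel.comp_measurable (comap_measurable _)).aestronglyMeasurable

theorem condExp_eval_succ_markovChainMeasure [NormedAddCommGroup E] [NormedSpace ℝ E]
    [CompleteSpace E] [BorelSpace E] [SecondCountableTopology E] (a : ℕ)
    (hmean : ∀ᵐ x ∂(markovChainMeasure μ₀ κ).map (fun x ↦ x a), ∫ y, y ∂κ a x = x)
    (hi : Integrable (fun x ↦ x (a + 1)) (markovChainMeasure μ₀ κ)) :
    (markovChainMeasure μ₀ κ)[fun x ↦ x (a + 1) |
        MeasurableSpace.comap (frestrictLe a) inferInstance]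
      =ᵐ[markovChainMeasure μ₀ κ] fun x ↦ x a :=
  (condExp_comp_eval_succ_markovChainMeasure a stronglyMeasurable_id hi).trans
    (ae_of_ae_map (measurable_pi_apply a).aemeasurable hmean)

end ProbabilityTheory

/-- Given an `ℝ^d`-valued martingale `(X₁,…,Xₙ)` with marginal laws `μᵢ`, there exists a
Markov martingale `(X̃₁,…,X̃ₙ)` with the same marginal laws.  The Markov property is
expressed by: the conditional expectation of any indicator of `X̃_{i+1}` given the past
`σ(X̃₁,…,X̃ᵢ)` coincides (a.e.) with the one given `σ(X̃ᵢ)` alone. -/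
theorem exists_markov_martingale_same_marginals (d n : ℕ)
    {Ω : Type*} [MeasurableSpace Ω] (P : Measure Ω) [IsProbabilityMeasure P]
    (X : Fin n → Ω → (Fin d → ℝ))
    (hmeas : ∀ i, Measurable (X i)) (hint : ∀ i, Integrable (X i) P)
    (hmart : ∀ (i : Fin n) (h : (i : ℕ) + 1 < n),
      P[X ⟨(i : ℕ) + 1, h⟩ |
          ⨆ j : Fin n, ⨆ _ : j ≤ i, MeasurableSpace.comap (X j) inferInstance]
        =ᵐ[P] X i) :
    ∃ (Ω' : Type) (_ : MeasurableSpace Ω') (P' : Measure Ω'), IsProbabilityMeasure P' ∧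
      ∃ Y : Fin n → Ω' → (Fin d → ℝ),
        (∀ i, Measurable (Y i)) ∧ (∀ i, Integrable (Y i) P') ∧
        (∀ i, P'.map (Y i) = P.map (X i)) ∧
        (∀ (i : Fin n) (h : (i : ℕ) + 1 < n),
          P'[Y ⟨(i : ℕ) + 1, h⟩ |
              ⨆ j : Fin n, ⨆ _ : j ≤ i, MeasurableSpace.comap (Y j) inferInstance]
            =ᵐ[P'] Y i) ∧
        (∀ (i : Fin n) (h : (i : ℕ) + 1 < n) (s : Set (Fin d → ℝ)), MeasurableSet s →
          P'[(fun ω => s.indicator (fun _ => (1 : ℝ)) (Y ⟨(i : ℕ) + 1, h⟩ ω)) |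
              ⨆ j : Fin n, ⨆ _ : j ≤ i, MeasurableSpace.comap (Y j) inferInstance]
            =ᵐ[P']
          P'[(fun ω => s.indicator (fun _ => (1 : ℝ)) (Y ⟨(i : ℕ) + 1, h⟩ ω)) |
              MeasurableSpace.comap (Y i) inferInstance]) := by
  set Z : ℕ → Ω → (Fin d → ℝ) := fun m ↦ if h : m < n then X ⟨m, h⟩ else 0
  have hZX (i : Fin n) : Z i = X i := dif_pos i.isLt
  have hZ (m : ℕ) : Measurable (Z m) := by
    unfold Z
    split_ifs
    exacts [hmeas _, measurable_const]
  have := Measure.isProbabilityMeasure_map (μ := P) (hZ 0).aemeasurable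
  set Q := markovChainMeasure (P.map (Z 0)) fun k ↦ condDistrib (Z (k + 1)) (Z k) P
  have hlaw (i : Fin n) : Q.map (fun x ↦ x i) = P.map (X i) := by
    rw [map_eval_markovChainMeasure_condDistrib hZ, hZX]
  have hident (i : Fin n) : IdentDistrib (fun x : ℕ → Fin d → ℝ ↦ x i) (X i) Q P :=
    ⟨(measurable_pi_apply _).aemeasurable, (hmeas i).aemeasurable, hlaw i⟩
  refine ⟨ℕ → Fin d → ℝ, inferInstance, Q, inferInstance, fun i x ↦ x i,
    fun i ↦ measurable_pi_apply _, fun i ↦ (hident i).integrable_iff.2 (hint i), hlaw, ?_, ?_⟩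
  · intro i h
    rw [iSup_comap_eval_le_eq_comap_frestrictLe]
    refine condExp_eval_succ_markovChainMeasure i ?_
      ((hident ⟨i + 1, h⟩).integrable_iff.2 (hint _))
    rw [hlaw, hZX, show Z (i + 1) = X ⟨i + 1, h⟩ from hZX ⟨i + 1, h⟩]
    exact ae_integral_condDistrib_eq_self_of_condExp_ae_eq (hmeas i) (hint i) (hint _)
      (hmart i h) (le_iSup₂_of_le i le_rfl le_rfl) (iSup₂_le fun j _ ↦ (hmeas j).comap_le)
  · intro i h s hs
    have hf : StronglyMeasurable (s.indicator fun _ ↦ (1 : ℝ)) :=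
      stronglyMeasurable_const.indicator hs
    have hfi : Integrable (fun x : ℕ → Fin d → ℝ ↦ s.indicator (fun _ ↦ (1 : ℝ)) (x (i + 1))) Q :=
      .of_bound (hf.comp_measurable (measurable_pi_apply _)).aestronglyMeasurable 1
        (ae_of_all _ fun _ ↦ (norm_indicator_le_norm_self _ _).trans_eq norm_one)
    rw [iSup_comap_eval_le_eq_comap_frestrictLe]
    exact condExp_comp_eval_succ_markovChainMeasure_eq_condExp_eval i hf hfi
end

section
/- Let X₁, X₂, ..., Xₙ, ... be a martingale on [0,∞) such that E[(Xₙ - t)^+] ≤ E[(Y - t)^+] for all n and t ≥ 0 for a fixed integrable nonnegative random variable Y, and suppose the distribution functions of Xₙ converge pointwise to that of Y. Then the sequence (Xₙ) is uniformly integrable: for every ε > 0 there is t₀ such that sup_n E[Xₙ · 1_{Xₙ > t}] < ε for all t > t₀. -/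
open MeasureTheory Filter Set

/-- A nonnegative martingale `(Xₙ)` whose transforms `E[(Xₙ-t)⁺]` are dominated by those
of a fixed integrable nonnegative `Y`, and whose distribution functions converge
pointwise to that of `Y`, is uniformly integrable: for every `ε > 0` there is `t₀` such
that `E[Xₙ 1_{Xₙ > t}] < ε` for all `n` and all `t > t₀`. -/
theorem uniformly_integrable_of_psi_dominated
    {Ω : Type*} [MeasurableSpace Ω] (P : Measure Ω) [IsProbabilityMeasure P]
    (X : ℕ → Ω → ℝ) (Y : Ω → ℝ)
    (hmeas : ∀ n, Measurable (X n)) (hmY : Measurable Y)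
    (hnn : ∀ n ω, 0 ≤ X n ω) (hnnY : ∀ ω, 0 ≤ Y ω)
    (hint : ∀ n, Integrable (X n) P) (hintY : Integrable Y P)
    (hmart : ∀ n : ℕ,
      P[X (n + 1) |
          ⨆ j : ℕ, ⨆ _ : j ≤ n, MeasurableSpace.comap (X j) Real.measurableSpace]
        =ᵐ[P] X n)
    (hdom : ∀ (n : ℕ) (t : ℝ), 0 ≤ t →
      ∫ ω, max (X n ω - t) 0 ∂P ≤ ∫ ω, max (Y ω - t) 0 ∂P)
    (hcdf : ∀ t : ℝ, Tendsto (fun n => (P {ω | X n ω ≤ t}).toReal) atTop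
      (nhds ((P {ω | Y ω ≤ t}).toReal))) :
    ∀ ε > (0:ℝ), ∃ t₀ : ℝ, ∀ t > t₀, ∀ n, ∫ ω in {ω | X n ω > t}, X n ω ∂P < ε := by
  intro ε hε
  -- The truncated expectations of Y tend to 0 by dominated convergence.
  have hY : Tendsto (fun k : ℕ => ∫ ω, max (Y ω - k) 0 ∂P) atTop (nhds 0) := by
    have := MeasureTheory.tendsto_integral_of_dominated_convergence
      (F := fun k : ℕ => fun ω => max (Y ω - k) 0) (f := fun _ => (0:ℝ)) (bound := Y)
      (μ := P)
      (fun k => (((hmY.sub measurable_const).max measurable_const)).aestronglyMeasurable)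
      hintY
      (fun k => Filter.Eventually.of_forall fun ω => by
        rw [Real.norm_eq_abs, abs_of_nonneg (le_max_right _ _)]
        have hk0 : (0:ℝ) ≤ (k:ℝ) := Nat.cast_nonneg k
        exact max_le (by linarith) (hnnY ω))
      (Filter.Eventually.of_forall fun ω => by
        have : ∀ᶠ k : ℕ in atTop, max (Y ω - k) 0 = 0 := by
          obtain ⟨k, hk⟩ := exists_nat_ge (Y ω)
          filter_upwards [eventually_ge_atTop k] with m hm
          have : Y ω ≤ (m:ℝ) := hk.trans (by exact_mod_cast hm)
          simp [max_eq_right, sub_nonpos.mpr this]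
        exact tendsto_const_nhds.congr' (this.mono fun k hk => hk.symm))
    simpa using this
  -- Choose k with ∫ (Y - k)⁺ < ε/2.
  have hε2 : (0:ℝ) < ε / 2 := by linarith
  obtain ⟨k, hk⟩ := (hY.eventually (eventually_lt_nhds hε2)).exists

  refine ⟨2 * k, fun t ht n => ?_⟩
  have hk0 : (0:ℝ) ≤ (k:ℝ) := Nat.cast_nonneg k
  have ht0 : (0:ℝ) ≤ t := le_trans (by linarith) ht.le
  have ht2 : (0:ℝ) ≤ t / 2 := by linarith
  -- Integrabilities
  have hset : MeasurableSet {ω | X n ω > t} := measurableSet_lt measurable_const (hmeas n)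
  have hI1 : Integrable (fun ω => {ω | X n ω > t}.indicator (X n) ω) P :=
    (hint n).indicator hset
  have hI2 : Integrable (fun ω => 2 * max (X n ω - t / 2) 0) P :=
    (((hint n).sub (integrable_const _)).pos_part).const_mul 2
  have hI3 : Integrable (fun ω => max (Y ω - k) 0) P :=
    (hintY.sub (integrable_const _)).pos_part
  have hI4 : Integrable (fun ω => max (Y ω - t / 2) 0) P :=
    (hintY.sub (integrable_const _)).pos_part
  -- Pointwise bound: 1_{Xₙ>t} Xₙ ≤ 2 (Xₙ - t/2)⁺
  have hpt : ∀ ω, {ω | X n ω > t}.indicator (X n) ω ≤ 2 * max (X n ω - t / 2) 0 := by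
    intro ω
    by_cases h : X n ω > t
    · rw [Set.indicator_of_mem (show ω ∈ {ω | X n ω > t} from h)]
      have : X n ω ≤ 2 * (X n ω - t / 2) := by linarith
      exact this.trans (by have := le_max_left (X n ω - t / 2) (0:ℝ); linarith)
    · rw [Set.indicator_of_notMem (show ω ∉ {ω | X n ω > t} from h)]
      positivity
  calc ∫ ω in {ω | X n ω > t}, X n ω ∂P
      = ∫ ω, {ω | X n ω > t}.indicator (X n) ω ∂P := by
        rw [integral_indicator hset]
    _ ≤ ∫ ω, 2 * max (X n ω - t / 2) 0 ∂P := integral_mono hI1 hI2 hpt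
    _ = 2 * ∫ ω, max (X n ω - t / 2) 0 ∂P := integral_const_mul 2 _
    _ ≤ 2 * ∫ ω, max (Y ω - t / 2) 0 ∂P := by
        have := hdom n (t / 2) ht2
        linarith
    _ ≤ 2 * ∫ ω, max (Y ω - k) 0 ∂P := by
        have hmono : ∀ ω, max (Y ω - t / 2) 0 ≤ max (Y ω - k) 0 := fun ω =>
          max_le_max (by linarith) le_rfl
        have := integral_mono hI4 hI3 hmono
        linarith
    _ < ε := by linarith
end
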